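/- arXiv:1704.01863 — 3 statements merged into one kernel-verified Lean document; each statement's English description precedes it below -/
import Mathlib

section
/- Let N and R be normal subgroups of a group G, let n : G → G/N and r : G → G/R be the quotient homomorphisms, and let x : G/N → G/(N ⊔ R) and y : G/R → G/(N ⊔ R) be the canonical homomorphisms induced by the inclusions N ≤ N ⊔ R and R ≤ N ⊔ R. Then for all a ∈ G/N and b ∈ G/R with x(a) = y(b), there exists e ∈ G such that n(e) = a and r(e) = b. -/
open scoped Pointwise

namespace QuotientGroup

theorem exists_mk_eq_mk_and_mk_eq_mk_of_mk_sup_eq {G : Type*} [Group G] {N R : Subgroup G}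
    [R.Normal] {g h : G} (hgh : (g : G ⧸ (N ⊔ R)) = h) :
    ∃ e : G, (e : G ⧸ N) = g ∧ (e : G ⧸ R) = h := by
  have hmem : g⁻¹ * h ∈ (N : Set G) * (R : Set G) := by
    rw [← Subgroup.mul_normal]
    exact QuotientGroup.eq.mp hgh
  obtain ⟨m, hm, s, hs, hms⟩ := hmem
  refine ⟨g * m, QuotientGroup.eq.mpr ?_, QuotientGroup.eq.mpr ?_⟩
  · simpa using N.inv_mem hm
  · have : (g * m)⁻¹ * h = s := by
      rw [mul_inv_rev, mul_assoc, ← hms]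
      group
    exact this ▸ hs

end QuotientGroup

theorem stmt_1 {G : Type*} [Group G] (N R : Subgroup G) [N.Normal] [R.Normal]
    (n : G →* G ⧸ N) (r : G →* G ⧸ R)
    (x : G ⧸ N →* G ⧸ (N ⊔ R)) (y : G ⧸ R →* G ⧸ (N ⊔ R))
    (hn : n = QuotientGroup.mk' N) (hr : r = QuotientGroup.mk' R)
    (hx : x = QuotientGroup.map N (N ⊔ R) (MonoidHom.id G) (fun g hg => Subgroup.mem_sup_left hg))
    (hy : y = QuotientGroup.map R (N ⊔ R) (MonoidHom.id G) (fun g hg => Subgroup.mem_sup_right hg))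
    (a : G ⧸ N) (b : G ⧸ R) (hab : x a = y b) :
    ∃ e : G, n e = a ∧ r e = b := by
  subst hn hr hx hy
  obtain ⟨g, rfl⟩ := QuotientGroup.mk_surjective a
  obtain ⟨h, rfl⟩ := QuotientGroup.mk_surjective b
  exact QuotientGroup.exists_mk_eq_mk_and_mk_eq_mk_of_mk_sup_eq hab
end

section
/- (Butterfly Lemma) Let S, S', T, T' be subgroups of a group G with S' ≤ S, S' normal in S, T' ≤ T, and T' normal in T. Then S' ⊔ (S ⊓ T') is normal in S' ⊔ (S ⊓ T), and (S' ⊓ T) ⊔ T' is normal in (S ⊓ T) ⊔ T', and there is an isomorphism of groups (S' ⊔ (S ⊓ T))/(S' ⊔ (S ⊓ T')) ≅ ((S ⊓ T) ⊔ T')/((S' ⊓ T) ⊔ T'). -/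
/-!
Put `L = S ⊓ T`. Since `L` normalizes `S'` and `S ⊓ T'` is normal in `L`, the second
isomorphism theorem identifies `(S' ⊔ L) / (S' ⊔ S ⊓ T')` with `L / ((S' ⊔ S ⊓ T') ⊓ L)`, and
Dedekind's modular law computes that kernel as `S' ⊓ T ⊔ S ⊓ T'`. The situation is symmetric
in `(S, S')` and `(T, T')`, so `(L ⊔ T') / (S' ⊓ T ⊔ T')` is the quotient of `L` by the same
subgroup.
-/

namespace Subgroup

open scoped Pointwise

variable {G : Type*} [Group G]

theorem sup_inf_assoc_of_le_of_le_normalizer {N K L : Subgroup G} (hKL : K ≤ L)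
    (hK : K ≤ normalizer N) : (K ⊔ N) ⊓ L = K ⊔ N ⊓ L := by
  refine le_antisymm (fun x hx => ?_)
    (le_inf (sup_le_sup_left inf_le_left K) (sup_le hKL inf_le_right))
  have hx' : x ∈ (↑(L ⊓ N) : Set G) * K := by
    rw [inf_mul_assoc L N K hKL, ← coe_mul_of_right_le_normalizer_left N K hK, sup_comm]
    exact ⟨hx.2, hx.1⟩
  obtain ⟨a, ha, b, hb, rfl⟩ := hx'
  exact mul_mem (mem_sup_right (inf_comm L N ▸ ha)) (mem_sup_left hb)

theorem exists_normal_sup_quotient_mulEquiv {N K L : Subgroup G} (hL : L ≤ normalizer N)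
    (hKL : K ≤ L) (hK : (K.subgroupOf L).Normal) :
    ∃ (_ : ((N ⊔ K).subgroupOf (N ⊔ L)).Normal) (_ : ((K ⊔ N ⊓ L).subgroupOf L).Normal),
      Nonempty ((↥(N ⊔ L) ⧸ (N ⊔ K).subgroupOf (N ⊔ L)) ≃*
        (↥L ⧸ (K ⊔ N ⊓ L).subgroupOf L)) := by
  have hLNK : L ≤ normalizer (N ⊔ K : Subgroup G) :=
    le_inf hL ((normal_subgroupOf_iff_le_normalizer hKL).mp hK) |>.trans
      (normalizer_inf_normalizer_le_normalizer_sup N K)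
  have hsup : L ⊔ (N ⊔ K) = N ⊔ L := by rw [sup_left_comm, sup_eq_left.mpr hKL]
  have hker : (N ⊔ K).subgroupOf L = (K ⊔ N ⊓ L).subgroupOf L := by
    rw [← inf_subgroupOf_right, sup_comm,
      sup_inf_assoc_of_le_of_le_normalizer hKL (hKL.trans hL)]
  rw [← hsup, ← hker]
  have := normal_subgroupOf_sup_of_le_normalizer hLNK
  have := normal_subgroupOf_of_le_normalizer hLNK
  exact ⟨inferInstance, inferInstance,
    ⟨(QuotientGroup.quotientInfEquivProdNormalizerQuotient L (N ⊔ K) hLNK).symm⟩⟩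

end Subgroup

open Subgroup in
theorem stmt_9 {G : Type*} [Group G] (S S' T T' : Subgroup G)
    (hS : S' ≤ S) (hSn : (S'.subgroupOf S).Normal)
    (hT : T' ≤ T) (hTn : (T'.subgroupOf T).Normal) :
    ∃ (_h1 : ((S' ⊔ S ⊓ T').subgroupOf (S' ⊔ S ⊓ T)).Normal)
      (_h2 : ((S' ⊓ T ⊔ T').subgroupOf (S ⊓ T ⊔ T')).Normal),
      Nonempty ((↥(S' ⊔ S ⊓ T) ⧸ (S' ⊔ S ⊓ T').subgroupOf (S' ⊔ S ⊓ T)) ≃*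
        (↥(S ⊓ T ⊔ T') ⧸ (S' ⊓ T ⊔ T').subgroupOf (S ⊓ T ⊔ T'))) := by
  have hSnorm := (normal_subgroupOf_iff_le_normalizer hS).mp hSn
  have hTnorm := (normal_subgroupOf_iff_le_normalizer hT).mp hTn
  have hLeft := exists_normal_sup_quotient_mulEquiv (N := S')
    (inf_le_left.trans hSnorm) (inf_le_inf_left S hT) (inf_subgroupOf_inf_normal_of_right S T' T)
  have hRight := exists_normal_sup_quotient_mulEquiv (N := T')
    (inf_le_right.trans hTnorm) (inf_le_inf_right T hS) (inf_subgroupOf_inf_normal_of_left T)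
  rw [← inf_assoc, inf_eq_left.mpr hS] at hLeft
  rw [sup_comm T' (S' ⊓ T), sup_comm T' (S ⊓ T), inf_comm T', inf_assoc, inf_eq_right.mpr hT,
    sup_comm (S' ⊓ T) (S ⊓ T')] at hRight
  obtain ⟨hLeftNormal, _, ⟨eLeft⟩⟩ := hLeft
  obtain ⟨hRightNormal, _, ⟨eRight⟩⟩ := hRight
  exact ⟨hLeftNormal, hRightNormal, ⟨eLeft.trans eRight.symm⟩⟩
end

section
/- Let S, S', T, T' be subgroups of a group G with S' ≤ S, S' normal in S, T' ≤ T, and T' normal in T. Then (S' ⊓ T) ⊔ (S ⊓ T') is normal in S ⊓ T, S ⊓ T' is normal in S ⊓ T, and there is an isomorphism of groups (S' ⊔ (S ⊓ T))/(S' ⊔ (S ⊓ T')) ≅ (S ⊓ T)/((S' ⊓ T) ⊔ (S ⊓ T')). -/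
/-!
Zassenhaus' butterfly lemma. The group `S ⊓ T` normalizes both `S'` and `S ⊓ T'`, hence their
join `N := S' ⊔ S ⊓ T'`, so Noether's second isomorphism theorem gives
`(S ⊓ T ⊔ N) / N ≃* (S ⊓ T) / (N ⊓ (S ⊓ T))`. Here `S ⊓ T ⊔ N = S' ⊔ S ⊓ T`, and Dedekind's
modular law, valid because `S ⊓ T'` normalizes `S'`, gives `N ⊓ (S ⊓ T) = S' ⊓ T ⊔ S ⊓ T'`.
-/

open Subgroup

namespace Subgroup

variable {G : Type*} [Group G]

theorem sup_inf_assoc_of_le_of_le_normalizer_s10 {A B C : Subgroup G} (hAC : A ≤ C)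
    (hA : A ≤ normalizer B) : (A ⊔ B) ⊓ C = A ⊔ B ⊓ C := by
  refine le_antisymm ?_ (le_inf (sup_le_sup_left inf_le_left A) (sup_le hAC inf_le_right))
  intro x hx
  obtain ⟨hx, hxC⟩ := mem_inf.mp hx
  rw [← SetLike.mem_coe, coe_mul_of_left_le_normalizer_right A B hA] at hx
  obtain ⟨a, ha, b, hb, rfl⟩ := hx
  have hbC : b ∈ C := by simpa using mul_mem (inv_mem (hAC ha)) hxC
  exact mul_mem (mem_sup_left ha) (mem_sup_right ⟨hb, hbC⟩)

section Butterfly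

variable {S S' T T' : Subgroup G}

theorem inf_le_normalizer_sup_inf (hS : S' ≤ S) (hT : T' ≤ T) [(S'.subgroupOf S).Normal]
    [(T'.subgroupOf T).Normal] : S ⊓ T ≤ normalizer (S' ⊔ S ⊓ T' : Subgroup G) :=
  have : ((S ⊓ T').subgroupOf (S ⊓ T)).Normal := inf_subgroupOf_inf_normal_of_right S T' T
  (le_inf (inf_le_left.trans (le_normalizer_of_normal_subgroupOf hS))
      (le_normalizer_of_normal_subgroupOf (inf_le_inf_left S hT))).trans
    (normalizer_inf_normalizer_le_normalizer_sup S' (S ⊓ T'))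

theorem sup_inf_inf_eq (hS : S' ≤ S) (hT : T' ≤ T) [(S'.subgroupOf S).Normal] :
    (S' ⊔ S ⊓ T') ⊓ (S ⊓ T) = S' ⊓ T ⊔ S ⊓ T' := by
  have hST' : S ⊓ T' ≤ normalizer (S' : Set G) :=
    inf_le_left.trans (le_normalizer_of_normal_subgroupOf hS)
  rw [sup_comm, sup_inf_assoc_of_le_of_le_normalizer_s10 (inf_le_inf_left S hT) hST',
    ← inf_assoc, inf_of_le_left hS, sup_comm]

end Butterfly

end Subgroup

namespace QuotientGroup

variable {G : Type*} [Group G]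

noncomputable def quotientSupEquivQuotientInfOfLeNormalizer {H N K M : Subgroup G}
    (hLE : H ≤ normalizer N) (hK : H ⊔ N = K) (hM : N ⊓ H = M)
    [(N.subgroupOf K).Normal] [(M.subgroupOf H).Normal] :
    K ⧸ N.subgroupOf K ≃* H ⧸ M.subgroupOf H := by
  subst hK hM
  have := normal_subgroupOf_of_le_normalizer hLE
  exact (quotientInfEquivProdNormalizerQuotient H N hLE).symm.trans
    (quotientMulEquivOfEq (inf_subgroupOf_right N H).symm)

end QuotientGroup

theorem stmt_10 {G : Type*} [Group G] (S S' T T' : Subgroup G)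
    (hS : S' ≤ S) (hSn : (S'.subgroupOf S).Normal)
    (hT : T' ≤ T) (hTn : (T'.subgroupOf T).Normal) :
    ∃ (_h1 : ((S' ⊓ T ⊔ S ⊓ T').subgroupOf (S ⊓ T)).Normal)
      (_h2 : ((S ⊓ T').subgroupOf (S ⊓ T)).Normal)
      (_h3 : ((S' ⊔ S ⊓ T').subgroupOf (S' ⊔ S ⊓ T)).Normal),
      Nonempty ((↥(S' ⊔ S ⊓ T) ⧸ (S' ⊔ S ⊓ T').subgroupOf (S' ⊔ S ⊓ T)) ≃*
        (↥(S ⊓ T) ⧸ (S' ⊓ T ⊔ S ⊓ T').subgroupOf (S ⊓ T))) := by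
  have hnorm := inf_le_normalizer_sup_inf hS hT
  have hsup : S ⊓ T ⊔ (S' ⊔ S ⊓ T') = S' ⊔ S ⊓ T := by
    rw [sup_left_comm, sup_eq_left.mpr (inf_le_inf_left S hT)]
  have hinf := sup_inf_inf_eq hS hT
  have h1 : ((S' ⊓ T ⊔ S ⊓ T').subgroupOf (S ⊓ T)).Normal := by
    rw [← hinf, inf_subgroupOf_right]
    exact normal_subgroupOf_of_le_normalizer hnorm
  have h3 : ((S' ⊔ S ⊓ T').subgroupOf (S' ⊔ S ⊓ T)).Normal :=
    hsup ▸ normal_subgroupOf_sup_of_le_normalizer hnorm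
  exact ⟨h1, inf_subgroupOf_inf_normal_of_right S T' T, h3,
    ⟨QuotientGroup.quotientSupEquivQuotientInfOfLeNormalizer hnorm hsup hinf⟩⟩
end
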